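/- arXiv:1103.2617 — 6 statements merged into one kernel-verified Lean document; each statement's English description precedes it below -/
import Mathlib

section
/- Let q be an integer with either |q| = 2 or q = 4m+3 for some integer m, and let X = Δ_2 be the group of 2-adic integers. Then there exist independent identically distributed random variables ξ_1, ξ_2 with values in X whose common distribution μ is not an idempotent distribution (μ ∉ I(X)) such that the conditional distribution of the linear form L_2 = ξ_1 + qξ_2 given L_1 = ξ_1 + ξ_2 is symmetric. -/
open MeasureTheory ProbabilityTheory

noncomputable section

instance (p : ℕ) [Fact p.Prime] : MeasurableSpace ℤ_[p] := borel _
instance (p : ℕ) [Fact p.Prime] : BorelSpace ℤ_[p] := ⟨rfl⟩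

/-! ### Topological automorphisms, characters, characteristic functions, and
special classes of probability distributions on topological Abelian groups. -/

section LCA

variable {X : Type*} [AddCommGroup X] [TopologicalSpace X]

/-- `f : X → X` is a topological automorphism of the topological Abelian group `X`. -/
def IsTopAut (f : X → X) : Prop :=
  ∃ e : X ≃+ X, Continuous e ∧ Continuous e.symm ∧ ⇑e = f

/-- The character group (Pontryagin dual) `Y = X^*` of `X`: the group of continuous
characters `X → Circle`, written multiplicatively, with the compact-open topology. -/
abbrev CharGroup (X : Type*) [AddCommGroup X] [TopologicalSpace X] : Type _ :=
  PontryaginDual (Multiplicative X)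

/-- The value `(x, y)` of a character `y ∈ Y` at a point `x ∈ X`, as a complex number. -/
def charVal (y : CharGroup X) (x : X) : ℂ := (y (Multiplicative.ofAdd x) : ℂ)

/-- The adjoint `δ̃ : Y → Y` of a continuous endomorphism `δ` of `X`, defined by
`(x, δ̃ y) = (δ x, y)`. -/
def adjointChar (δ : ContinuousAddMonoidHom X X) (y : CharGroup X) : CharGroup X :=
  y.comp ⟨AddMonoidHom.toMultiplicative δ.toAddMonoidHom, δ.continuous_toFun⟩

variable [MeasurableSpace X]

open MeasureTheory in
/-- The characteristic function `μ̂(y) = ∫_X (x,y) dμ(x)` of a measure `μ` on `X`. -/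
def charFun (μ : Measure X) (y : CharGroup X) : ℂ := ∫ x, charVal y x ∂μ

open MeasureTheory in
/-- `ν` is the Haar distribution `m_K` of the compact subgroup `K` of `X`: a probability
measure giving full mass to `K` and invariant under translations by elements of `K`. -/
def IsHaarOn (K : AddSubgroup X) (ν : Measure X) : Prop :=
  IsProbabilityMeasure ν ∧ IsCompact (K : Set X) ∧ ν (K : Set X) = 1 ∧
    ∀ k ∈ K, Measure.map (fun x => k + x) ν = ν

open MeasureTheory in
/-- `μ ∈ I(X)`: `μ` is an idempotent distribution, i.e. a shift of the Haar
distribution `m_K` of some compact subgroup `K` of `X`. -/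
def IsIdempotentDist (μ : Measure X) : Prop :=
  ∃ (K : AddSubgroup X) (x : X) (ν : Measure X), IsHaarOn K ν ∧
    μ = Measure.map (fun z => x + z) ν

open MeasureTheory in
/-- The convolution `μ * ν` of two measures on `X`. -/
def mconv (μ ν : Measure X) : Measure X :=
  Measure.map (fun p : X × X => p.1 + p.2) (μ.prod ν)

open MeasureTheory in
/-- The support `σ(μ)` of a measure `μ` on `X`. -/
def msupport (μ : Measure X) : Set X := {x | ∀ U : Set X, IsOpen U → x ∈ U → 0 < μ U}

open MeasureTheory in
/-- The support of `μ` is contained in a coset of some proper closed subgroup of `X`. -/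
def SupportInProperCoset (μ : Measure X) : Prop :=
  ∃ (K : AddSubgroup X) (x : X), IsClosed (K : Set X) ∧ K ≠ ⊤ ∧
    msupport μ ⊆ (fun k => x + k) '' (K : Set X)

variable [IsTopologicalAddGroup X]

open MeasureTheory in
/-- `γ ∈ Γ(X)`: `γ` is a Gaussian distribution on `X`, i.e. a probability measure whose
characteristic function has the form `γ̂(y) = (x₀,y)·exp(−φ(y))`, where `φ` is a continuous
nonnegative function on the character group `Y` satisfying
`φ(u+v) + φ(u−v) = 2(φ(u) + φ(v))` (the character group is written multiplicatively). -/
def IsGaussian (γ : Measure X) : Prop :=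
  IsProbabilityMeasure γ ∧
  ∃ (x₀ : X) (φ : CharGroup X → ℝ), Continuous φ ∧ (∀ y, 0 ≤ φ y) ∧
    (∀ u v : CharGroup X, φ (u * v) + φ (u * v⁻¹) = 2 * (φ u + φ v)) ∧
    ∀ y : CharGroup X, charFun γ y = charVal y x₀ * Complex.exp (-(φ y : ℂ))

open MeasureTheory in
/-- `μ ∈ Γ(X)*I(X)`: `μ` is the convolution of a Gaussian distribution and an
idempotent distribution on `X`. -/
def IsGaussConvIdemp (μ : Measure X) : Prop :=
  ∃ γ ι : Measure X, IsGaussian γ ∧ IsIdempotentDist ι ∧ μ = mconv γ ι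

end LCA

/-!
Let `μ` be Haar measure on `Δ₂` reweighted so that the even 2-adic integers get mass `3/4` and
the odd ones `1/4`. An idempotent distribution gives a subgroup of index two mass `0`, `1/2` or
`1`, so `μ ∉ I(X)`. The hypothesis on `q` gives `(q - 1) c = 2` for some `c ∈ Δ₂`, and then an
explicit continuous involutive automorphism `B` of `X²` satisfies `(L₁, L₂) ∘ B = (L₁, -L₂)`.
Being an automorphism, `B` preserves Haar measure on `X²`; being congruent mod 2 to the identity
or to the swap of coordinates, it preserves the density of `μ ⊗ μ`. Hence `B` preserves `μ ⊗ μ`,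
and the laws of `(L₁, L₂)` and `(L₁, -L₂)` agree.
-/

open scoped ENNReal

theorem ProbabilityTheory.indepFun_fst_snd {α β : Type*} [MeasurableSpace α]
    [MeasurableSpace β] (μ : Measure α) (ν : Measure β) [IsProbabilityMeasure μ]
    [IsProbabilityMeasure ν] : IndepFun Prod.fst Prod.snd (μ.prod ν) := by
  rw [indepFun_iff_map_prod_eq_prod_map_map measurable_fst.aemeasurable
    measurable_snd.aemeasurable]
  simp

theorem MeasureTheory.MeasurePreserving.map_withDensity_eq_self {α : Type*}
    [MeasurableSpace α] {μ : Measure α} {f : α → ℝ≥0∞} {B : α → α}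
    (hB : MeasurePreserving B μ μ) (hf : Measurable f) (hfB : ∀ a, f (B a) = f a) :
    (μ.withDensity f).map B = μ.withDensity f := by
  ext s hs
  rw [Measure.map_apply hB.measurable hs, withDensity_apply _ (hB.measurable hs),
    withDensity_apply _ hs, ← hB.setLIntegral_comp_preimage hs hf]
  simp only [hfB]

theorem AddMonoidHom.measurePreserving_of_surjective {G : Type*} [AddGroup G]
    [TopologicalSpace G] [IsTopologicalAddGroup G] [LocallyCompactSpace G] [MeasurableSpace G]
    [BorelSpace G] (μ : Measure G) [μ.IsAddHaarMeasure] [IsProbabilityMeasure μ] (f : G →+ G)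
    (hf : Continuous f) (hsurj : Function.Surjective f) : MeasurePreserving f μ μ := by
  have := μ.isAddHaarMeasure_map_of_isFiniteMeasure f hf hsurj
  have := Measure.isProbabilityMeasure_map (μ := μ) hf.measurable.aemeasurable
  exact ⟨hf.measurable, Measure.isAddHaarMeasure_eq_of_isProbabilityMeasure _ _⟩

instance {G : Type*} [AddGroup G] [TopologicalSpace G] [IsTopologicalAddGroup G]
    [CompactSpace G] [Nonempty G] [MeasurableSpace G] [BorelSpace G] :
    IsProbabilityMeasure (Measure.addHaarMeasure (⊤ : TopologicalSpace.PositiveCompacts G)) :=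
  ⟨by simpa using
    Measure.addHaarMeasure_self (K₀ := (⊤ : TopologicalSpace.PositiveCompacts G))⟩

section IndexTwo

variable {X : Type*} [AddCommGroup X] [MeasurableSpace X] [MeasurableAdd X]
  {H : AddSubgroup X}

theorem AddSubgroup.measure_eq_half_of_map_add_eq (hH : H.index = 2)
    (hHm : MeasurableSet (H : Set X)) {μ : Measure X} [IsProbabilityMeasure μ] {k : X}
    (hk : k ∉ H) (hμ : μ.map (k + ·) = μ) : μ H = 2⁻¹ := by
  have hshift : (k + ·) ⁻¹' (H : Set X) = (H : Set X)ᶜ := by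
    ext z
    simp [AddSubgroup.add_mem_iff_of_index_two hH, hk]
  have hcompl : μ (H : Set X)ᶜ = μ H := by
    rw [← hshift, ← Measure.map_apply (measurable_const_add k) hHm, hμ]
  have htwo : 2 * μ H = 1 := by
    rw [two_mul, ← measure_univ (μ := μ), ← measure_add_measure_compl hHm, hcompl]
  exact ENNReal.eq_inv_of_mul_eq_one_left (by rwa [mul_comm])

theorem IsIdempotentDist.measure_of_index_two_eq_zero_or_half_or_one [TopologicalSpace X]
    [T2Space X] [OpensMeasurableSpace X] (hH : H.index = 2) (hHm : MeasurableSet (H : Set X))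
    {μ : Measure X} (hμ : IsIdempotentDist μ) : μ H = 0 ∨ μ H = 2⁻¹ ∨ μ H = 1 := by
  obtain ⟨K, x, ν, ⟨hν, hK, hνK, hinv⟩, rfl⟩ := hμ
  have hKm : MeasurableSet (K : Set X) := hK.isClosed.measurableSet
  by_cases hKH : K ≤ H
  · rw [Measure.map_apply (measurable_const_add x) hHm]
    by_cases hx : x ∈ H
    · refine Or.inr (Or.inr (le_antisymm prob_le_one ?_))
      rw [← hνK]
      exact measure_mono fun z hz => H.add_mem hx (hKH hz)
    · refine Or.inl (measure_mono_null (fun z (hz : x + z ∈ H) (hzK : z ∈ K) => hx ?_)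
        ((prob_compl_eq_zero_iff hKm).2 hνK))
      simpa using H.sub_mem hz (hKH hzK)
  · obtain ⟨k, hkK, hkH⟩ := SetLike.not_le_iff_exists.1 hKH
    have : IsProbabilityMeasure (ν.map (x + ·)) :=
      Measure.isProbabilityMeasure_map (measurable_const_add x).aemeasurable
    refine Or.inr (Or.inl (H.measure_eq_half_of_map_add_eq hH hHm hkH ?_))
    rw [Measure.map_map (measurable_const_add k) (measurable_const_add x)]
    conv_rhs =>
      rw [← hinv k hkK, Measure.map_map (measurable_const_add x) (measurable_const_add k)]
    exact congrArg (Measure.map · ν) (funext fun z => add_left_comm k x z)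

end IndexTwo

section CosetDensity

variable {X : Type*} [AddCommGroup X] [MeasurableSpace X] (H : AddSubgroup X)

open Classical in
def cosetDensity (x : X) : ℝ≥0∞ := if x ∈ H then 3 / 2 else 2⁻¹

variable {H}

theorem measurable_cosetDensity (hHm : MeasurableSet (H : Set X)) :
    Measurable (cosetDensity H) :=
  Measurable.ite hHm measurable_const measurable_const

theorem setLIntegral_cosetDensity_self (hHm : MeasurableSet (H : Set X)) (μ : Measure X) :
    ∫⁻ x in H, cosetDensity H x ∂μ = 3 / 2 * μ H := by
  rw [← setLIntegral_const]
  exact setLIntegral_congr_fun hHm fun x hx => if_pos hx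

theorem setLIntegral_cosetDensity_compl (hHm : MeasurableSet (H : Set X)) (μ : Measure X) :
    ∫⁻ x in (H : Set X)ᶜ, cosetDensity H x ∂μ = 2⁻¹ * μ (H : Set X)ᶜ := by
  rw [← setLIntegral_const]
  exact setLIntegral_congr_fun hHm.compl fun x hx => if_neg hx

variable {μ : Measure X}

theorem withDensity_cosetDensity_apply_self (hHm : MeasurableSet (H : Set X))
    (hμH : μ H = 2⁻¹) : μ.withDensity (cosetDensity H) H = 3 / 4 := by
  rw [withDensity_apply _ hHm, setLIntegral_cosetDensity_self hHm, hμH,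
    ← ENNReal.toReal_eq_toReal_iff' (by finiteness) (by finiteness)]
  norm_num

theorem isProbabilityMeasure_withDensity_cosetDensity [IsProbabilityMeasure μ]
    (hHm : MeasurableSet (H : Set X)) (hμH : μ H = 2⁻¹) :
    IsProbabilityMeasure (μ.withDensity (cosetDensity H)) := by
  constructor
  rw [withDensity_apply _ MeasurableSet.univ, Measure.restrict_univ,
    ← lintegral_add_compl _ hHm, setLIntegral_cosetDensity_self hHm,
    setLIntegral_cosetDensity_compl hHm, prob_compl_eq_one_sub hHm, hμH,
    ENNReal.one_sub_inv_two, ← ENNReal.toReal_eq_toReal_iff' (by finiteness) (by finiteness),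
    ENNReal.toReal_add (by finiteness) (by finiteness)]
  norm_num

theorem not_isIdempotentDist_withDensity_cosetDensity [TopologicalSpace X] [T2Space X]
    [OpensMeasurableSpace X] [MeasurableAdd X] (hH : H.index = 2)
    (hHm : MeasurableSet (H : Set X)) (hμH : μ H = 2⁻¹) :
    ¬ IsIdempotentDist (μ.withDensity (cosetDensity H)) := by
  intro hidem
  have hval := withDensity_cosetDensity_apply_self hHm hμH
  rcases hidem.measure_of_index_two_eq_zero_or_half_or_one hH hHm with h | h | h <;>
    rw [hval] at h <;> have := congrArg ENNReal.toReal h <;> norm_num at this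

end CosetDensity

section Reflection

variable {R : Type*} [CommRing R]

/-- With `c = 2 / (q - 1)` this is `T⁻¹ σ T = (q - 1)⁻¹ [[q + 1, 2q], [-2, -(q + 1)]]`, where
`T (x, y) = (x + y, x + q y)` and `σ (u, v) = (u, -v)`. -/
def reflectionConj (c : R) : R × R →+ R × R where
  toFun p := ((1 + c) * p.1 + (2 + c) * p.2, -(c * p.1 + (1 + c) * p.2))
  map_zero' := by simp
  map_add' p r := by ext <;> simp <;> ring

theorem reflectionConj_apply (c : R) (p : R × R) :
    reflectionConj c p = ((1 + c) * p.1 + (2 + c) * p.2, -(c * p.1 + (1 + c) * p.2)) := rfl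

theorem reflectionConj_involutive (c : R) : Function.Involutive (reflectionConj c) := by
  intro p
  simp only [reflectionConj_apply, Prod.ext_iff]
  constructor <;> ring

theorem continuous_reflectionConj [TopologicalSpace R] [IsTopologicalRing R] (c : R) :
    Continuous (reflectionConj c) := by
  show Continuous fun p : R × R => ((1 + c) * p.1 + (2 + c) * p.2, -(c * p.1 + (1 + c) * p.2))
  fun_prop

theorem linearForms_reflectionConj {q : ℤ} {c : R} (hc : ((q : R) - 1) * c = 2) (p : R × R) :
    ((reflectionConj c p).1 + (reflectionConj c p).2,
        (reflectionConj c p).1 + q • (reflectionConj c p).2) =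
      (p.1 + p.2, -(p.1 + q • p.2)) := by
  simp only [reflectionConj_apply, zsmul_eq_mul, Prod.ext_iff]
  constructor
  · ring
  · linear_combination (-p.1 - p.2) * hc

end Reflection

namespace PadicInt

def evens : AddSubgroup ℤ_[2] := (toZMod : ℤ_[2] →+* ZMod 2).toAddMonoidHom.ker

theorem mem_evens {x : ℤ_[2]} : x ∈ evens ↔ toZMod x = 0 := by
  simp [evens]

theorem index_evens : evens.index = 2 := by
  rw [evens, AddSubgroup.index_ker,
    AddMonoidHom.range_eq_top_of_surjective _ (ZMod.ringHom_surjective toZMod)]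
  simp

theorem measurableSet_evens : MeasurableSet (evens : Set ℤ_[2]) := by
  have : (evens : Set ℤ_[2]) = Metric.ball 0 1 := by
    ext x
    simp [mem_evens, ← RingHom.mem_ker, ker_toZMod, IsLocalRing.mem_maximalIdeal,
      not_isUnit_iff]
  rw [this]
  exact measurableSet_ball

theorem one_notMem_evens : (1 : ℤ_[2]) ∉ evens := by
  simp [mem_evens]

theorem isUnit_intCast_of_odd {k : ℤ} (hk : Odd k) : IsUnit (k : ℤ_[2]) := by
  rw [isUnit_iff]
  refine le_antisymm (norm_le_one _) (not_lt.1 ?_)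
  rw [norm_int_lt_one_iff_dvd, Nat.cast_ofNat, ← even_iff_two_dvd, Int.not_even_iff_odd]
  exact hk

theorem sub_one_dvd_two {q : ℤ} (hq : |q| = 2 ∨ ∃ m : ℤ, q = 4 * m + 3) :
    (q : ℤ_[2]) - 1 ∣ 2 := by
  rcases hq with hq | ⟨m, rfl⟩
  · have hodd : Odd (q - 1) := by
      rcases (abs_eq zero_le_two).1 hq with rfl | rfl <;> decide
    exact_mod_cast (isUnit_intCast_of_odd hodd).dvd
  · have hunit := isUnit_intCast_of_odd (k := 2 * m + 1) ⟨m, rfl⟩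
    have hsplit : ((4 * m + 3 : ℤ) : ℤ_[2]) - 1 = 2 * ((2 * m + 1 : ℤ) : ℤ_[2]) := by
      push_cast
      ring
    rw [hsplit]
    exact hunit.mul_right_dvd.2 dvd_rfl

theorem toZMod_reflectionConj (c : ℤ_[2]) (p : ℤ_[2] × ℤ_[2]) :
    (toZMod (reflectionConj c p).1, toZMod (reflectionConj c p).2) = (toZMod p.1, toZMod p.2) ∨
      (toZMod (reflectionConj c p).1, toZMod (reflectionConj c p).2) =
        (toZMod p.2, toZMod p.1) := by
  have hmod2 : ∀ a x y : ZMod 2,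
      ((1 + a) * x + (2 + a) * y, -(a * x + (1 + a) * y)) = (x, y) ∨
        ((1 + a) * x + (2 + a) * y, -(a * x + (1 + a) * y)) = (y, x) := by
    decide
  simpa [reflectionConj_apply, map_ofNat] using hmod2 (toZMod c) (toZMod p.1) (toZMod p.2)

theorem cosetDensity_evens_mul_reflectionConj (c : ℤ_[2]) (p : ℤ_[2] × ℤ_[2]) :
    cosetDensity evens (reflectionConj c p).1 * cosetDensity evens (reflectionConj c p).2 =
      cosetDensity evens p.1 * cosetDensity evens p.2 := by
  simp only [cosetDensity, mem_evens]
  rcases toZMod_reflectionConj c p with h | h <;> obtain ⟨h1, h2⟩ := Prod.mk.inj h <;>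
    rw [h1, h2]
  exact mul_comm _ _

local notation "haar₂" => Measure.addHaarMeasure (⊤ : TopologicalSpace.PositiveCompacts ℤ_[2])

theorem addHaarMeasure_evens : haar₂ (evens : Set ℤ_[2]) = 2⁻¹ :=
  evens.measure_eq_half_of_map_add_eq index_evens measurableSet_evens one_notMem_evens
    (map_add_left_eq_self _ 1)

def evenBiasedHaar : Measure ℤ_[2] := (haar₂).withDensity (cosetDensity evens)

instance : IsProbabilityMeasure evenBiasedHaar :=
  isProbabilityMeasure_withDensity_cosetDensity measurableSet_evens addHaarMeasure_evens

theorem not_isIdempotentDist_evenBiasedHaar : ¬ IsIdempotentDist evenBiasedHaar :=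
  not_isIdempotentDist_withDensity_cosetDensity index_evens measurableSet_evens
    addHaarMeasure_evens

theorem map_reflectionConj_evenBiasedHaar_prod (c : ℤ_[2]) :
    (evenBiasedHaar.prod evenBiasedHaar).map (reflectionConj c) =
      evenBiasedHaar.prod evenBiasedHaar := by
  have hd := measurable_cosetDensity measurableSet_evens
  have hB := (reflectionConj c).measurePreserving_of_surjective ((haar₂).prod haar₂)
    (continuous_reflectionConj c) (reflectionConj_involutive c).surjective
  rw [evenBiasedHaar, prod_withDensity hd hd]
  exact hB.map_withDensity_eq_self ((hd.comp measurable_fst).mul (hd.comp measurable_snd))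
    (cosetDensity_evens_mul_reflectionConj c)

end PadicInt

open PadicInt in
/-- **Lemma 2.** Let `q` be an integer with either `|q| = 2` or `q = 4m + 3` for some
integer `m`, and let `X = Δ₂` be the group of 2-adic integers.  Then there exist
independent identically distributed `X`-valued random variables `ξ₁, ξ₂` whose common
distribution `μ` is not an idempotent distribution, such that the conditional
distribution of the linear form `L₂ = ξ₁ + qξ₂` given `L₁ = ξ₁ + ξ₂` is symmetric. -/
theorem heyde_counterexample_two_adic
    (q : ℤ) (hq : |q| = 2 ∨ ∃ m : ℤ, q = 4 * m + 3) :
    ∃ (Ω : Type) (_ : MeasurableSpace Ω) (P : Measure Ω) (_ : IsProbabilityMeasure P)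
      (ξ1 ξ2 : Ω → ℤ_[2]),
      Measurable ξ1 ∧ Measurable ξ2 ∧ IndepFun ξ1 ξ2 P ∧
      P.map ξ1 = P.map ξ2 ∧
      ¬ IsIdempotentDist (P.map ξ1) ∧
      (P.map (fun ω => (ξ1 ω + ξ2 ω, ξ1 ω + q • ξ2 ω)) =
        P.map (fun ω => (ξ1 ω + ξ2 ω, -(ξ1 ω + q • ξ2 ω)))) := by
  obtain ⟨c, hc⟩ := sub_one_dvd_two hq
  set μ := evenBiasedHaar
  refine ⟨_, inferInstance, μ.prod μ, inferInstance, Prod.fst, Prod.snd, measurable_fst,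
    measurable_snd, indepFun_fst_snd μ μ, by simp,
    by simpa using not_isIdempotentDist_evenBiasedHaar, ?_⟩
  calc (μ.prod μ).map (fun p => (p.1 + p.2, p.1 + q • p.2))
      = ((μ.prod μ).map (reflectionConj c)).map (fun p => (p.1 + p.2, p.1 + q • p.2)) := by
        rw [map_reflectionConj_evenBiasedHaar_prod c]
    _ = (μ.prod μ).map (fun p => (p.1 + p.2, -(p.1 + q • p.2))) := by
        rw [Measure.map_map (by fun_prop) (continuous_reflectionConj c).measurable]
        exact congrArg (Measure.map · (μ.prod μ)) (funext (linearForms_reflectionConj hc.symm))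
end
end

section
/- Let X be a locally compact second countable Abelian group, let δ_1, δ_2 be continuous endomorphisms of X, and let ξ_1, ξ_2 be independent random variables with values in X and distributions μ_1, μ_2. If the conditional distribution of the linear form L_2 = δ_1ξ_1 + δ_2ξ_2 given L_1 = ξ_1 + ξ_2 is symmetric, then the linear forms L'_1 = (δ_1+δ_2)ξ_1 + 2δ_2ξ_2 and L'_2 = 2δ_1ξ_1 + (δ_1+δ_2)ξ_2 are independent. -/
open MeasureTheory ProbabilityTheory

noncomputable section

/-!
The shear `(l₁, l₂) ↦ (δ₂ l₁ + l₂, δ₁ l₁ + l₂)` maps `(L₁, L₂)` to `(L′₁, L′₂)` and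
`(L₁, -L₂)` to `(δ₂ξ₁ - δ₁ξ₁, δ₁ξ₂ - δ₂ξ₂)`, a function of `ξ₁` paired with a function of `ξ₂`.
Symmetry says that `(L₁, L₂)` and `(L₁, -L₂)` have the same law, so `(L′₁, L′₂)` has the law
of a pair of independent random variables.
-/

section Shear

variable {X F : Type*} [AddCommGroup X] [FunLike F X X] [AddMonoidHomClass F X X]
  (δ1 δ2 : F) (x1 x2 : X)

theorem shear_linearForms :
    (δ2 (x1 + x2) + (δ1 x1 + δ2 x2), δ1 (x1 + x2) + (δ1 x1 + δ2 x2)) =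
      ((δ1 x1 + δ2 x1) + (δ2 x2 + δ2 x2), (δ1 x1 + δ1 x1) + (δ1 x2 + δ2 x2)) := by
  simp only [map_add, Prod.mk.injEq]
  constructor <;> abel

theorem shear_linearForms_neg :
    (δ2 (x1 + x2) + -(δ1 x1 + δ2 x2), δ1 (x1 + x2) + -(δ1 x1 + δ2 x2)) =
      (δ2 x1 - δ1 x1, δ1 x2 - δ2 x2) := by
  simp only [map_add, Prod.mk.injEq]
  constructor <;> abel

end Shear

theorem symmetry_implies_independence_of_modified_forms_general
    {X : Type*} [AddCommGroup X] [TopologicalSpace X] [IsTopologicalAddGroup X]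
    [SecondCountableTopology X]
    [MeasurableSpace X] [BorelSpace X]
    {Ω : Type*} [MeasurableSpace Ω] (P : Measure Ω) [IsProbabilityMeasure P]
    (ξ1 ξ2 : Ω → X) (hmeas1 : Measurable ξ1) (hmeas2 : Measurable ξ2)
    (hindep : IndepFun ξ1 ξ2 P)
    (δ1 δ2 : ContinuousAddMonoidHom X X)
    (hsym : P.map (fun ω => (ξ1 ω + ξ2 ω, δ1 (ξ1 ω) + δ2 (ξ2 ω))) =
      P.map (fun ω => (ξ1 ω + ξ2 ω, -(δ1 (ξ1 ω) + δ2 (ξ2 ω))))) :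
    IndepFun (fun ω => (δ1 (ξ1 ω) + δ2 (ξ1 ω)) + (δ2 (ξ2 ω) + δ2 (ξ2 ω)))
      (fun ω => (δ1 (ξ1 ω) + δ1 (ξ1 ω)) + (δ1 (ξ2 ω) + δ2 (ξ2 ω))) P := by
  have hδ1 : Measurable δ1 := δ1.continuous.measurable
  have hδ2 : Measurable δ2 := δ2.continuous.measurable
  have hL : IdentDistrib (fun ω => (ξ1 ω + ξ2 ω, δ1 (ξ1 ω) + δ2 (ξ2 ω)))
      (fun ω => (ξ1 ω + ξ2 ω, -(δ1 (ξ1 ω) + δ2 (ξ2 ω)))) P P :=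
    ⟨by fun_prop, by fun_prop, hsym⟩
  have hshear : Measurable fun p : X × X => (δ2 p.1 + p.2, δ1 p.1 + p.2) := by fun_prop
  have hind : IndepFun (fun ω => δ2 (ξ1 ω) - δ1 (ξ1 ω)) (fun ω => δ1 (ξ2 ω) - δ2 (ξ2 ω)) P :=
    hindep.comp (hδ2.sub hδ1) (hδ1.sub hδ2)
  refine indepFun_of_identDistrib_pair hind ?_
  simpa only [Function.comp_def, shear_linearForms, shear_linearForms_neg] using
    (hL.comp hshear).symm

/-- **Lemma 6.** Let `X` be a locally compact second countable Abelian group, let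
`δ₁, δ₂` be continuous endomorphisms of `X`, and let `ξ₁, ξ₂` be independent `X`-valued
random variables with distributions `μ₁, μ₂`.  If the conditional distribution of the
linear form `L₂ = δ₁ξ₁ + δ₂ξ₂` given `L₁ = ξ₁ + ξ₂` is symmetric, then the linear forms
`L′₁ = (δ₁+δ₂)ξ₁ + 2δ₂ξ₂` and `L′₂ = 2δ₁ξ₁ + (δ₁+δ₂)ξ₂` are independent. -/
theorem symmetry_implies_independence_of_modified_forms
    {X : Type*} [AddCommGroup X] [TopologicalSpace X] [IsTopologicalAddGroup X]
    [LocallyCompactSpace X] [SecondCountableTopology X]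
    [MeasurableSpace X] [BorelSpace X]
    {Ω : Type*} [MeasurableSpace Ω] (P : Measure Ω) [IsProbabilityMeasure P]
    (ξ1 ξ2 : Ω → X) (hmeas1 : Measurable ξ1) (hmeas2 : Measurable ξ2)
    (hindep : IndepFun ξ1 ξ2 P)
    (μ1 μ2 : Measure X) (hμ1 : μ1 = P.map ξ1) (hμ2 : μ2 = P.map ξ2)
    (δ1 δ2 : ContinuousAddMonoidHom X X)
    (hsym : P.map (fun ω => (ξ1 ω + ξ2 ω, δ1 (ξ1 ω) + δ2 (ξ2 ω))) =
      P.map (fun ω => (ξ1 ω + ξ2 ω, -(δ1 (ξ1 ω) + δ2 (ξ2 ω))))) :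
    IndepFun (fun ω => (δ1 (ξ1 ω) + δ2 (ξ1 ω)) + (δ2 (ξ2 ω) + δ2 (ξ2 ω)))
      (fun ω => (δ1 (ξ1 ω) + δ1 (ξ1 ω)) + (δ1 (ξ2 ω) + δ2 (ξ2 ω))) P :=
  symmetry_implies_independence_of_modified_forms_general P ξ1 ξ2 hmeas1 hmeas2 hindep δ1 δ2 hsym
end
end

section
/- Let Y be an Abelian group, let a, b be integers with ab ≠ 0, and let g_1, g_2 : Y → ℂ be functions satisfying g_1(u+av)·g_2(u+bv) = g_1(u)·g_1(av)·g_2(u)·g_2(bv) for all u, v ∈ Y, together with g_1(−y) = conj(g_1(y)), g_2(−y) = conj(g_2(y)) for all y ∈ Y and g_1(0) = g_2(0) = 1. Set c = a − b. If for some z_0 ∈ Y the element y_0 = c·z_0 satisfies g_1(y_0)·g_2(y_0) ≠ 0, then g_1(y)·g_2(y) ≠ 0 for every y in the subgroup M = {k·a·b·z_0 : k ∈ ℤ}. -/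
/-!
Write `S` for the set where `g₁ g₂` does not vanish and `W` for the set of `v` with
`g₁(av) g₂(bv) ≠ 0`. Since the right-hand side of the functional equation is
`(g₁ u g₂ u) · (g₁(av) g₂(bv))`, the equation says: `g₁(u+av)`, `g₂(u+bv)` are both nonzero
iff `u ∈ S` and `v ∈ W`. Read backwards at `u = -b z₀` and `u = -a z₀`, `v = z₀`, it puts
`a z₀` and `b z₀` into `S`; read forwards, it makes `W` stable under `+ z₀` and then `S` stable
under `+ ab z₀`. Both sets are symmetric because `g(-y) = conj (g y)`.
-/

theorem zsmul_induction {Y : Type*} [AddCommGroup Y] {P : Y → Prop} {x : Y} (zero : P 0)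
    (neg : ∀ y, P y → P (-y)) (add : ∀ y, P y → P (y + x)) (k : ℤ) : P (k • x) := by
  have hnat : ∀ n : ℕ, P ((n : ℤ) • x) := fun n => by
    induction n with
    | zero => simpa using zero
    | succ n ih => simpa [add_smul] using add _ ih
  obtain ⟨n, rfl | rfl⟩ := k.eq_nat_or_neg
  · exact hnat n
  · simpa [neg_smul] using neg _ (hnat n)

section

variable {Y : Type*} [AddCommGroup Y] {g1 g2 : Y → ℂ}

theorem mul_apply_neg_ne_zero_iff (hg1 : ∀ y : Y, g1 (-y) = starRingEnd ℂ (g1 y))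
    (hg2 : ∀ y : Y, g2 (-y) = starRingEnd ℂ (g2 y)) (y y' : Y) :
    g1 (-y) * g2 (-y') ≠ 0 ↔ g1 y * g2 y' ≠ 0 := by
  rw [hg1, hg2, ← map_mul, map_ne_zero]

def FunctionalEq (a b : ℤ) (g1 g2 : Y → ℂ) : Prop :=
  ∀ u v : Y, g1 (u + a • v) * g2 (u + b • v) = g1 u * g1 (a • v) * g2 u * g2 (b • v)

namespace FunctionalEq

variable {a b : ℤ}

theorem mul_ne_zero_iff (h : FunctionalEq a b g1 g2) (u v : Y) :
    g1 (u + a • v) * g2 (u + b • v) ≠ 0 ↔ g1 u * g2 u ≠ 0 ∧ g1 (a • v) * g2 (b • v) ≠ 0 := by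
  rw [h u v, show g1 u * g1 (a • v) * g2 u * g2 (b • v) = g1 u * g2 u * (g1 (a • v) * g2 (b • v))
    by ring, _root_.mul_ne_zero_iff]

theorem smul_mul_ne_zero_of_sub_smul (h : FunctionalEq a b g1 g2)
    (hg1 : ∀ y : Y, g1 (-y) = starRingEnd ℂ (g1 y)) (hg2 : ∀ y : Y, g2 (-y) = starRingEnd ℂ (g2 y))
    (hg10 : g1 0 = 1) (hg20 : g2 0 = 1) {z : Y} (hz : g1 ((a - b) • z) * g2 ((a - b) • z) ≠ 0) :
    g1 (a • z) * g2 (a • z) ≠ 0 ∧ g1 (b • z) * g2 (b • z) ≠ 0 := by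
  have hsub1 : g1 ((a - b) • z) ≠ 0 := left_ne_zero_of_mul hz
  have hsub2 : g2 (-((a - b) • z)) ≠ 0 := by
    rw [hg2, map_ne_zero]
    exact right_ne_zero_of_mul hz
  have hb := (h.mul_ne_zero_iff (-(b • z)) z).1 <| by
    rwa [neg_add_cancel, hg20, mul_one, neg_add_eq_sub, ← sub_smul]
  have ha := (h.mul_ne_zero_iff (-(a • z)) z).1 <| by
    rwa [neg_add_cancel, hg10, one_mul, neg_add_eq_sub, ← sub_smul, ← neg_sub, neg_smul]
  exact ⟨(mul_apply_neg_ne_zero_iff hg1 hg2 _ _).1 ha.1, (mul_apply_neg_ne_zero_iff hg1 hg2 _ _).1 hb.1⟩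

theorem smul_add_ne_zero (h : FunctionalEq a b g1 g2) {t v : Y}
    (ha : g1 (a • t) * g2 (a • t) ≠ 0) (hb : g1 (b • t) * g2 (b • t) ≠ 0)
    (hv : g1 (a • v) * g2 (b • v) ≠ 0) :
    g1 (a • (t + v)) * g2 (b • (t + v)) ≠ 0 := by
  rw [smul_add, smul_add]
  exact mul_ne_zero (left_ne_zero_of_mul ((h.mul_ne_zero_iff _ v).2 ⟨ha, hv⟩))
    (right_ne_zero_of_mul ((h.mul_ne_zero_iff _ v).2 ⟨hb, hv⟩))

theorem add_mul_smul_ne_zero (h : FunctionalEq a b g1 g2) {u t : Y} (hu : g1 u * g2 u ≠ 0)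
    (ha : g1 (a • a • t) * g2 (b • a • t) ≠ 0) (hb : g1 (a • b • t) * g2 (b • b • t) ≠ 0) :
    g1 (u + (a * b) • t) * g2 (u + (a * b) • t) ≠ 0 := by
  have h1 := left_ne_zero_of_mul ((h.mul_ne_zero_iff u (b • t)).2 ⟨hu, hb⟩)
  have h2 := right_ne_zero_of_mul ((h.mul_ne_zero_iff u (a • t)).2 ⟨hu, ha⟩)
  rw [smul_smul] at h1 h2
  rw [mul_comm b a] at h2
  exact mul_ne_zero h1 h2

end FunctionalEq

end

theorem nonvanishing_on_subgroup_general
    {Y : Type*} [AddCommGroup Y] (a b : ℤ)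
    (g1 g2 : Y → ℂ)
    (heq : ∀ u v : Y, g1 (u + a • v) * g2 (u + b • v) =
      g1 u * g1 (a • v) * g2 u * g2 (b • v))
    (hg1 : ∀ y : Y, g1 (-y) = starRingEnd ℂ (g1 y))
    (hg2 : ∀ y : Y, g2 (-y) = starRingEnd ℂ (g2 y))
    (hg10 : g1 0 = 1) (hg20 : g2 0 = 1)
    (z0 : Y) (hnz : g1 ((a - b) • z0) * g2 ((a - b) • z0) ≠ 0) :
    ∀ y ∈ AddSubgroup.zmultiples ((a * b) • z0), g1 y * g2 y ≠ 0 := by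
  have h : FunctionalEq a b g1 g2 := heq
  obtain ⟨haz, hbz⟩ := h.smul_mul_ne_zero_of_sub_smul hg1 hg2 hg10 hg20 hnz
  have hW : ∀ n : ℤ, g1 (a • n • z0) * g2 (b • n • z0) ≠ 0 :=
    zsmul_induction (P := fun v => g1 (a • v) * g2 (b • v) ≠ 0) (by simp [hg10, hg20])
      (fun v hv => by rwa [smul_neg, smul_neg, mul_apply_neg_ne_zero_iff hg1 hg2])
      (fun v hv => by rw [add_comm]; exact h.smul_add_ne_zero haz hbz hv)
  rintro _ ⟨k, rfl⟩
  exact zsmul_induction (P := fun y => g1 y * g2 y ≠ 0) (by simp [hg10, hg20])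
    (fun u hu => (mul_apply_neg_ne_zero_iff hg1 hg2 u u).2 hu)
    (fun u hu => h.add_mul_smul_ne_zero hu (hW a) (hW b)) k

/-- **Lemma 7.** Let `Y` be an Abelian group, `a, b` integers with `ab ≠ 0`, and let
`g₁, g₂ : Y → ℂ` satisfy `g₁(u+av)·g₂(u+bv) = g₁(u)·g₁(av)·g₂(u)·g₂(bv)` for all
`u, v ∈ Y`, together with `gⱼ(−y) = conj(gⱼ(y))` and `gⱼ(0) = 1`.  Set `c = a − b`.
If for some `z₀ ∈ Y` the element `y₀ = c·z₀` satisfies `g₁(y₀)·g₂(y₀) ≠ 0`, then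
`g₁(y)·g₂(y) ≠ 0` for every `y` in the subgroup `M = {k·a·b·z₀ : k ∈ ℤ}`. -/
theorem nonvanishing_on_subgroup
    {Y : Type*} [AddCommGroup Y] (a b : ℤ) (hab : a * b ≠ 0)
    (g1 g2 : Y → ℂ)
    (heq : ∀ u v : Y, g1 (u + a • v) * g2 (u + b • v) =
      g1 u * g1 (a • v) * g2 u * g2 (b • v))
    (hg1 : ∀ y : Y, g1 (-y) = starRingEnd ℂ (g1 y))
    (hg2 : ∀ y : Y, g2 (-y) = starRingEnd ℂ (g2 y))
    (hg10 : g1 0 = 1) (hg20 : g2 0 = 1)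
    (z0 : Y) (hnz : g1 ((a - b) • z0) * g2 ((a - b) • z0) ≠ 0) :
    ∀ y ∈ AddSubgroup.zmultiples ((a * b) • z0), g1 y * g2 y ≠ 0 :=
  nonvanishing_on_subgroup_general a b g1 g2 heq hg1 hg2 hg10 hg20 z0 hnz
end

section
/- Let M be a subgroup of ℚ, let a, b be integers with ab ≠ 0, and let g_1, g_2 : M → ℝ be functions satisfying g_1(u+av)·g_2(u+bv) = g_1(u)·g_1(av)·g_2(u)·g_2(bv) for all u, v ∈ M, together with g_1(−y) = g_1(y), g_2(−y) = g_2(y), g_1(0) = g_2(0) = 1, and 0 < g_1(y) ≤ 1, 0 < g_2(y) ≤ 1 for all y ∈ M. Set c = b − a. Then there exist λ_1 ≥ 0 and λ_2 ≥ 0 such that g_1(y) = exp(−λ_1 y²) and g_2(y) = exp(−λ_2 y²) for all y in the subgroup M^{(cab)} = {c·a·b·y : y ∈ M}. -/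
/-!
Taking logarithms, `fⱼ = log gⱼ` satisfy `f₁(u+av) + f₂(u+bv) = f₁(u) + f₁(av) + f₂(u) + f₂(bv)`.
Comparing three instances of this equation shows that the second difference of `f₁` with steps
`as` and `(b-a)t` does not depend on the base point; choosing `as = cab·y = -(b-a)t` turns this
into the parallelogram law for `f₁` along `M^{(cab)}`, and symmetrically for `f₂`. The
parallelogram law gives `f(nx) = n²f(x)`, and since any two elements of `M ⊆ ℚ` have a common
integer multiple, `f(x) = -λx²` on `M^{(cab)}`, with `λ ≥ 0` because `f ≤ 0`.
-/

open Real

section FunctionalEquation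

variable {G : Type*} [AddCommGroup G] {a b : ℤ}

theorem log_funeq_of_funeq {g1 g2 : G → ℝ} (hg1 : ∀ y, 0 < g1 y) (hg2 : ∀ y, 0 < g2 y)
    (heq : ∀ u v, g1 (u + a • v) * g2 (u + b • v) = g1 u * g1 (a • v) * g2 u * g2 (b • v))
    (u v : G) :
    (log ∘ g1) (u + a • v) + (log ∘ g2) (u + b • v) =
      (log ∘ g1) u + (log ∘ g1) (a • v) + (log ∘ g2) u + (log ∘ g2) (b • v) := by
  have h1 u := (hg1 u).ne'
  have h2 u := (hg2 u).ne'
  simp only [Function.comp_apply]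
  rw [← log_mul (h1 _) (h2 _), heq, log_mul, log_mul, log_mul] <;> simp [h1, h2]

variable {f1 f2 : G → ℝ}

theorem second_diff_eq_of_funeq
    (hf : ∀ u v, f1 (u + a • v) + f2 (u + b • v) = f1 u + f1 (a • v) + f2 u + f2 (b • v))
    (u s t : G) :
    f1 (u + a • s + (b - a) • t) - f1 (u + a • s) - f1 (u + (b - a) • t) + f1 u =
      f1 (a • s + (b - a) • t) - f1 (a • s) - f1 ((b - a) • t) + f1 0 := by
  have key : ∀ u, f1 (u + a • s + (b - a) • t) - f1 (u + a • s) - f1 (u + (b - a) • t) + f1 u =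
      f1 (a • s - a • t) + f2 (b • s - b • t) - f1 (a • s) - f2 (b • s)
        - f1 (-(a • t)) - f2 (-(b • t)) := by
    intro u
    have h1 := hf (u + b • t) (s - t)
    have h2 := hf u s
    have h3 := hf (u + b • t) (-t)
    rw [show u + b • t + a • (s - t) = u + a • s + (b - a) • t by module,
      show u + b • t + b • (s - t) = u + b • s by module, smul_sub, smul_sub] at h1
    rw [show u + b • t + a • (-t) = u + (b - a) • t by module,
      show u + b • t + b • (-t) = u by module, smul_neg, smul_neg] at h3
    linarith
  simpa using (key u).trans (key 0).symm

theorem parallelogram_of_funeq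
    (hf : ∀ u v, f1 (u + a • v) + f2 (u + b • v) = f1 u + f1 (a • v) + f2 u + f2 (b • v))
    (heven : ∀ y, f1 (-y) = f1 y) (h0 : f1 0 = 0) (u y : G) :
    f1 (u + ((b - a) * a * b) • y) + f1 (u - ((b - a) * a * b) • y) =
      2 * f1 u + 2 * f1 (((b - a) * a * b) • y) := by
  have h := second_diff_eq_of_funeq hf u (((b - a) * b) • y) ((-(a * b)) • y)
  rw [show a • ((b - a) * b) • y = ((b - a) * a * b) • y by module,
    show (b - a) • (-(a * b)) • y = -(((b - a) * a * b) • y) by module] at h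
  simp only [← sub_eq_add_neg, add_sub_cancel_right, sub_self, heven, h0] at h
  linarith

theorem parallelogram_of_funeq_right
    (hf : ∀ u v, f1 (u + a • v) + f2 (u + b • v) = f1 u + f1 (a • v) + f2 u + f2 (b • v))
    (heven : ∀ y, f2 (-y) = f2 y) (h0 : f2 0 = 0) (u y : G) :
    f2 (u + ((b - a) * a * b) • y) + f2 (u - ((b - a) * a * b) • y) =
      2 * f2 u + 2 * f2 (((b - a) * a * b) • y) := by
  have h := parallelogram_of_funeq (f1 := f2) (f2 := f1) (fun u v ↦ by linarith [hf u v])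
    heven h0 u y
  rw [show (a - b) * b * a = -((b - a) * a * b) by ring, neg_smul, sub_neg_eq_add, heven,
    ← sub_eq_add_neg] at h
  linarith

end FunctionalEquation

theorem zsmul_eq_sq_mul_of_parallelogram {G : Type*} [AddCommGroup G] {φ : G → ℝ} (h0 : φ 0 = 0)
    {x : G} (hpar : ∀ k : ℤ, φ (k • x + x) + φ (k • x - x) = 2 * φ (k • x) + 2 * φ x) (n : ℤ) :
    φ (n • x) = n ^ 2 * φ x := by
  let P (m : ℤ) := φ (m • x) = (m : ℝ) ^ 2 * φ x ∧ φ ((m + 1) • x) = ((m : ℝ) + 1) ^ 2 * φ x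
  have up (m : ℤ) (hm : P m) : P (m + 1) := by
    have := hpar (m + 1)
    rw [show (m + 1) • x - x = m • x by module, ← show (m + 1 + 1) • x = (m + 1) • x + x by module]
      at this
    constructor
    · rw [hm.2]; push_cast; ring
    · push_cast; linear_combination this - hm.1 + 2 * hm.2
  have down (m : ℤ) (hm : P m) : P (m - 1) := by
    have := hpar m
    rw [← show (m - 1) • x = m • x - x by module, ← show (m + 1) • x = m • x + x by module] at this
    constructor
    · push_cast; linear_combination this - hm.2 + 2 * hm.1
    · rw [sub_add_cancel, hm.1]; push_cast; ring
  suffices ∀ m, P m from (this n).1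
  intro m
  induction m using Int.induction_on with
  | zero => simp [P, h0]
  | succ i ih => exact up _ ih
  | pred i ih => exact down _ ih

theorem sq_mul_eq_sq_mul_of_parallelogram {M : AddSubgroup ℚ} {φ : M → ℝ} (h0 : φ 0 = 0)
    {x y : M}
    (hx : ∀ k : ℤ, φ (k • x + x) + φ (k • x - x) = 2 * φ (k • x) + 2 * φ x)
    (hy : ∀ k : ℤ, φ (k • y + y) + φ (k • y - y) = 2 * φ (k • y) + 2 * φ y) :
    ((x : ℚ) : ℝ) ^ 2 * φ y = ((y : ℚ) : ℝ) ^ 2 * φ x := by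
  by_cases hx0 : x = 0
  · simp [hx0, h0]
  have hxq : (x : ℚ) ≠ 0 := by simpa using hx0
  set q : ℚ := y / x
  have hq : (q.den : ℚ) * y = q.num * x := by
    have hy : (y : ℚ) = q * x := (div_mul_cancel₀ _ hxq).symm
    rw [hy, ← Rat.mul_den_eq_num]
    ring
  have hsmul : (q.den : ℤ) • y = q.num • x := Subtype.ext (by push_cast [zsmul_eq_mul]; exact hq)
  have hφ : (q.den : ℝ) ^ 2 * φ y = (q.num : ℝ) ^ 2 * φ x := by
    have := congrArg φ hsmul
    rw [zsmul_eq_sq_mul_of_parallelogram h0 hy, zsmul_eq_sq_mul_of_parallelogram h0 hx] at this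
    exact_mod_cast this
  have hqR : (q.den : ℝ) * (y : ℚ) = q.num * (x : ℚ) := by exact_mod_cast hq
  have hden : (q.den : ℝ) ^ 2 ≠ 0 := by positivity
  refine mul_left_cancel₀ hden ?_
  linear_combination ((x : ℚ) : ℝ) ^ 2 * hφ - (q.num * (x : ℚ) + q.den * (y : ℚ)) * φ x * hqR

theorem exists_gaussian_of_parallelogram {M : AddSubgroup ℚ} {g : M → ℝ} {N : ℤ}
    (hg : ∀ y, 0 < g y ∧ g y ≤ 1) (hg0 : g 0 = 1)
    (hpar : ∀ u y : M, (log ∘ g) (u + N • y) + (log ∘ g) (u - N • y) =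
      2 * (log ∘ g) u + 2 * (log ∘ g) (N • y)) :
    ∃ lam : ℝ, 0 ≤ lam ∧ ∀ y : M, g (N • y) = exp (-(lam * (((N • y : M) : ℚ) : ℝ) ^ 2)) := by
  have hquad (x y : M) : (((N • x : M) : ℚ) : ℝ) ^ 2 * log (g (N • y)) =
      (((N • y : M) : ℚ) : ℝ) ^ 2 * log (g (N • x)) := by
    refine sq_mul_eq_sq_mul_of_parallelogram (φ := log ∘ g) (by simp [hg0])
      (fun k ↦ ?_) (fun k ↦ ?_) <;> rw [← smul_comm N k] <;> exact hpar _ _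
  by_cases hN : ∀ x : M, N • x = 0
  · exact ⟨0, le_rfl, fun y ↦ by simp [hN y, hg0]⟩
  obtain ⟨x, hx⟩ := not_forall.1 hN
  have hX : (((N • x : M) : ℚ) : ℝ) ≠ 0 := by simpa [and_comm] using hx
  refine ⟨-log (g (N • x)) / (((N • x : M) : ℚ) : ℝ) ^ 2,
    div_nonneg (neg_nonneg.2 (log_nonpos (hg _).1.le (hg _).2)) (sq_nonneg _), fun y ↦ ?_⟩
  rw [← exp_log (hg (N • y)).1]
  congr 1
  field_simp
  linear_combination hquad x y

theorem gaussian_form_on_subgroup_general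
    (M : AddSubgroup ℚ) (a b : ℤ)
    (g1 g2 : M → ℝ)
    (heq : ∀ u v : M, g1 (u + a • v) * g2 (u + b • v) =
      g1 u * g1 (a • v) * g2 u * g2 (b • v))
    (hg1 : ∀ y : M, g1 (-y) = g1 y) (hg2 : ∀ y : M, g2 (-y) = g2 y)
    (hg10 : g1 0 = 1) (hg20 : g2 0 = 1)
    (hpos1 : ∀ y : M, 0 < g1 y ∧ g1 y ≤ 1) (hpos2 : ∀ y : M, 0 < g2 y ∧ g2 y ≤ 1) :
    ∃ lam1 lam2 : ℝ, 0 ≤ lam1 ∧ 0 ≤ lam2 ∧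
      ∀ y : M, g1 (((b - a) * a * b) • y) =
          Real.exp (-(lam1 * ((((((b - a) * a * b) • y : M) : ℚ) : ℝ)) ^ 2)) ∧
        g2 (((b - a) * a * b) • y) =
          Real.exp (-(lam2 * ((((((b - a) * a * b) • y : M) : ℚ) : ℝ)) ^ 2)) := by
  have hlog := log_funeq_of_funeq (fun y ↦ (hpos1 y).1) (fun y ↦ (hpos2 y).1) heq
  obtain ⟨lam1, hlam1, h1⟩ := exists_gaussian_of_parallelogram hpos1 hg10 <|
    parallelogram_of_funeq hlog (by simp [hg1]) (by simp [hg10])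
  obtain ⟨lam2, hlam2, h2⟩ := exists_gaussian_of_parallelogram hpos2 hg20 <|
    parallelogram_of_funeq_right hlog (by simp [hg2]) (by simp [hg20])
  exact ⟨lam1, lam2, hlam1, hlam2, fun y ↦ ⟨h1 y, h2 y⟩⟩

/-- **Lemma 8.** Let `M` be a subgroup of `ℚ`, let `a, b` be integers with `ab ≠ 0`, and
let `g₁, g₂ : M → ℝ` satisfy `g₁(u+av)·g₂(u+bv) = g₁(u)·g₁(av)·g₂(u)·g₂(bv)` for all
`u, v ∈ M`, together with `gⱼ(−y) = gⱼ(y)`, `gⱼ(0) = 1` and `0 < gⱼ(y) ≤ 1`.  Set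
`c = b − a`.  Then there exist `λ₁, λ₂ ≥ 0` such that `g₁(y) = exp(−λ₁y²)` and
`g₂(y) = exp(−λ₂y²)` for all `y` in the subgroup `M^{(cab)} = {c·a·b·y : y ∈ M}`. -/
theorem gaussian_form_on_subgroup
    (M : AddSubgroup ℚ) (a b : ℤ) (hab : a * b ≠ 0)
    (g1 g2 : M → ℝ)
    (heq : ∀ u v : M, g1 (u + a • v) * g2 (u + b • v) =
      g1 u * g1 (a • v) * g2 u * g2 (b • v))
    (hg1 : ∀ y : M, g1 (-y) = g1 y) (hg2 : ∀ y : M, g2 (-y) = g2 y)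
    (hg10 : g1 0 = 1) (hg20 : g2 0 = 1)
    (hpos1 : ∀ y : M, 0 < g1 y ∧ g1 y ≤ 1) (hpos2 : ∀ y : M, 0 < g2 y ∧ g2 y ≤ 1) :
    ∃ lam1 lam2 : ℝ, 0 ≤ lam1 ∧ 0 ≤ lam2 ∧
      ∀ y : M, g1 (((b - a) * a * b) • y) =
          Real.exp (-(lam1 * ((((((b - a) * a * b) • y : M) : ℚ) : ℝ)) ^ 2)) ∧
        g2 (((b - a) * a * b) • y) =
          Real.exp (-(lam2 * ((((((b - a) * a * b) • y : M) : ℚ) : ℝ)) ^ 2)) :=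
  gaussian_form_on_subgroup_general M a b g1 g2 heq hg1 hg2 hg10 hg20 hpos1 hpos2
end

section
/- Let X = Σ_a be an a-adic solenoid. There exist relatively prime nonzero integers p and q such that f_p, f_q, f_{p+q}, f_{p−q} ∈ Aut(X) if and only if f_2 ∈ Aut(X) and f_3 ∈ Aut(X). -/
open MeasureTheory ProbabilityTheory

noncomputable section

/-! ### The a-adic integers and the a-adic solenoid -/

/-- `radix a n = a 0 * a 1 * ⋯ * a (n-1)`. -/
def radix (a : ℕ → ℕ) (n : ℕ) : ℕ := ∏ i ∈ Finset.range n, a i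

lemma radix_dvd_succ (a : ℕ → ℕ) (n : ℕ) : radix a n ∣ radix a (n + 1) := by
  rw [radix, radix, Finset.prod_range_succ]; exact dvd_mul_right _ _

instance (n : ℕ) : TopologicalSpace (ZMod n) := ⊥
instance (n : ℕ) : DiscreteTopology (ZMod n) := ⟨rfl⟩

/-- The group `Δ_a` of `a`-adic integers: sequences of digits `(x_0, x_1, …)`,
`0 ≤ x_n < a n`, with addition with carries.  It is realized here, in the standard
equivalent way, as the projective limit of the cyclic groups `ℤ/(a 0 ⋯ a n)ℤ`,
i.e. as the subgroup of the product `∀ n, ZMod (radix a (n+1))` (carrying the product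
topology, each factor being discrete) consisting of the compatible sequences:
the sequence of digits `(x_0, …, x_n)` corresponds to the residue
`x_0 + x_1 * a 0 + ⋯ + x_n * (a 0 * ⋯ * a (n-1))` modulo `a 0 * ⋯ * a n`. -/
def aAdicIntegers (a : ℕ → ℕ) : AddSubgroup (∀ n : ℕ, ZMod (radix a (n + 1))) where
  carrier := {x | ∀ n : ℕ,
    ZMod.castHom (radix_dvd_succ a (n + 1)) (ZMod (radix a (n + 1))) (x (n + 1)) = x n}
  zero_mem' := by intro n; simp
  add_mem' := by intro x y hx hy n; simp only [Pi.add_apply, map_add, hx n, hy n]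
  neg_mem' := by intro x hx n; simp only [Pi.neg_apply, map_neg, hx n]

/-- The element `u = (1, 0, 0, …)` of `Δ_a`, i.e. the `a`-adic integer `1`. -/
def aAdicOne (a : ℕ → ℕ) : aAdicIntegers a := ⟨fun _ => 1, fun _ => map_one _⟩

/-- The subgroup `B = {(n, n·u) : n ∈ ℤ}` of `ℝ × Δ_a`, where `u = (1, 0, 0, …)`. -/
def solenoidKernel (a : ℕ → ℕ) : AddSubgroup (ℝ × aAdicIntegers a) :=
  AddSubgroup.zmultiples ((1 : ℝ), aAdicOne a)

/-- The `a`-adic solenoid `Σ_a = (ℝ × Δ_a)/B`. -/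
abbrev Solenoid (a : ℕ → ℕ) : Type := (ℝ × aAdicIntegers a) ⧸ solenoidKernel a

instance (a : ℕ → ℕ) : MeasurableSpace (Solenoid a) := borel _
instance (a : ℕ → ℕ) : BorelSpace (Solenoid a) := ⟨rfl⟩

/-!
If `f_{mk}` is a topological automorphism then so is `f_m`, with inverse `f_k ∘ f_{mk}⁻¹`.
Among `p`, `q`, `p + q` one is even and among `p`, `q`, `p + q`, `p - q` one is divisible
by `3`, so `f_2` and `f_3` are automorphisms. Conversely `p = 3`, `q = 1` works, since
`f_4 = f_2 ∘ f_2`.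
-/

namespace IsTopAut

variable {X : Type*} [AddCommGroup X] [TopologicalSpace X]

theorem zsmul_one : IsTopAut (fun x : X => (1 : ℤ) • x) :=
  ⟨AddEquiv.refl X, continuous_id, continuous_id, funext fun x => (one_zsmul x).symm⟩

theorem zsmul_mul {m k : ℤ} (hm : IsTopAut (fun x : X => m • x))
    (hk : IsTopAut (fun x : X => k • x)) : IsTopAut (fun x : X => (m * k) • x) := by
  obtain ⟨em, hm_cont, hm_symm, hem⟩ := hm
  obtain ⟨ek, hk_cont, hk_symm, hek⟩ := hk
  refine ⟨ek.trans em, hm_cont.comp hk_cont, hk_symm.comp hm_symm, funext fun x => ?_⟩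
  simp [hem, hek, mul_smul]

variable [IsTopologicalAddGroup X]

theorem zsmul_of_dvd {m n : ℤ} (hmn : m ∣ n) (hn : IsTopAut (fun x : X => n • x)) :
    IsTopAut (fun x : X => m • x) := by
  obtain ⟨k, rfl⟩ := hmn
  obtain ⟨e, -, he_symm, he⟩ := hn
  have he_apply (x : X) : e x = (m * k) • x := congrFun he x
  have right_inv (y : X) : m • k • e.symm y = y := by
    rw [← mul_smul, ← he_apply, e.apply_symm_apply]
  have injective : Function.Injective (fun x : X => m • x) := fun x y hxy => e.injective <| by
    simp only [he_apply, mul_comm m, mul_smul]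
    exact congrArg (k • ·) hxy
  refine ⟨{ toFun := (m • ·)
            invFun := fun y => k • e.symm y
            left_inv := fun x => injective (right_inv (m • x))
            right_inv := right_inv
            map_add' := smul_add m },
    continuous_zsmul m, (continuous_zsmul k).comp he_symm, rfl⟩

end IsTopAut

theorem Int.two_dvd_or_two_dvd_or_two_dvd_add (p q : ℤ) : 2 ∣ p ∨ 2 ∣ q ∨ 2 ∣ p + q := by
  omega

theorem Int.three_dvd_or_three_dvd_or_three_dvd_add_or_three_dvd_sub (p q : ℤ) :
    3 ∣ p ∨ 3 ∣ q ∨ 3 ∣ p + q ∨ 3 ∣ p - q := by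
  rcases (by omega : p % 3 = 0 ∨ p % 3 = 1 ∨ p % 3 = 2) with hp | hp | hp <;>
    rcases (by omega : q % 3 = 0 ∨ q % 3 = 1 ∨ q % 3 = 2) with hq | hq | hq <;> omega

theorem exists_coprime_isTopAut_zsmul_iff (X : Type*) [AddCommGroup X] [TopologicalSpace X]
    [IsTopologicalAddGroup X] :
    (∃ p q : ℤ, p ≠ 0 ∧ q ≠ 0 ∧ IsCoprime p q ∧
      IsTopAut (fun x : X => p • x) ∧ IsTopAut (fun x : X => q • x) ∧
      IsTopAut (fun x : X => (p + q) • x) ∧ IsTopAut (fun x : X => (p - q) • x)) ↔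
    (IsTopAut (fun x : X => (2 : ℤ) • x) ∧ IsTopAut (fun x : X => (3 : ℤ) • x)) := by
  constructor
  · rintro ⟨p, q, -, -, -, hp, hq, hadd, hsub⟩
    constructor
    · rcases Int.two_dvd_or_two_dvd_or_two_dvd_add p q with h | h | h
      exacts [hp.zsmul_of_dvd h, hq.zsmul_of_dvd h, hadd.zsmul_of_dvd h]
    · rcases Int.three_dvd_or_three_dvd_or_three_dvd_add_or_three_dvd_sub p q with h | h | h | h
      exacts [hp.zsmul_of_dvd h, hq.zsmul_of_dvd h, hadd.zsmul_of_dvd h, hsub.zsmul_of_dvd h]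
  · rintro ⟨h2, h3⟩
    exact ⟨3, 1, by norm_num, one_ne_zero, isCoprime_one_right, h3, IsTopAut.zsmul_one,
      h2.zsmul_mul h2, h2⟩

theorem solenoid_admissible_coefficients_iff_general
    (a : ℕ → ℕ) :
    (∃ p q : ℤ, p ≠ 0 ∧ q ≠ 0 ∧ IsCoprime p q ∧
      IsTopAut (fun x : Solenoid a => p • x) ∧
      IsTopAut (fun x : Solenoid a => q • x) ∧
      IsTopAut (fun x : Solenoid a => (p + q) • x) ∧
      IsTopAut (fun x : Solenoid a => (p - q) • x)) ↔
    (IsTopAut (fun x : Solenoid a => (2 : ℤ) • x) ∧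
      IsTopAut (fun x : Solenoid a => (3 : ℤ) • x)) :=
  exists_coprime_isTopAut_zsmul_iff (Solenoid a)

/-- **Remark 3.** On an a-adic solenoid `X = Σ_a` there exist relatively prime nonzero
integers `p, q` with `f_p, f_q, f_{p+q}, f_{p−q} ∈ Aut(X)` if and only if
`f₂, f₃ ∈ Aut(X)`. -/
theorem solenoid_admissible_coefficients_iff
    (a : ℕ → ℕ) (ha : ∀ n, 1 < a n) :
    (∃ p q : ℤ, p ≠ 0 ∧ q ≠ 0 ∧ IsCoprime p q ∧
      IsTopAut (fun x : Solenoid a => p • x) ∧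
      IsTopAut (fun x : Solenoid a => q • x) ∧
      IsTopAut (fun x : Solenoid a => (p + q) • x) ∧
      IsTopAut (fun x : Solenoid a => (p - q) • x)) ↔
    (IsTopAut (fun x : Solenoid a => (2 : ℤ) • x) ∧
      IsTopAut (fun x : Solenoid a => (3 : ℤ) • x)) :=
  solenoid_admissible_coefficients_iff_general a
end
end

section
/- Let Y be an Abelian group, let ε_1, ε_2 be endomorphisms of Y, and let f, g : Y → ℂ be functions with f(0) = g(0) = 1 satisfying f(u + ε_1v)·g(u + ε_2v) = f(u − ε_1v)·g(u − ε_2v) for all u, v ∈ Y. Then f((ε_1+ε_2)t + 2ε_1s)·g(2ε_2t + (ε_1+ε_2)s) = f((ε_1+ε_2)t)·g(2ε_2t)·f(2ε_1s)·g((ε_1+ε_2)s) for all s, t ∈ Y. -/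
/-!
Apply the equation at `u = ε₁s + ε₂t, v = s + t`: the left side becomes the left side of the
claim and the right side is `f(ε₂t − ε₁t)·g(ε₁s − ε₂s)`. Each of these two factors is evaluated
by the equation once more, at `u = ε₂t, v = t` (where `g(0) = 1`) and at `u = ε₁s, v = s`
(where `f(0) = 1`).
-/

section

variable {Y M : Type*} [AddCommGroup Y] [CommMonoid M]

def SymmetryEquation (ε1 ε2 : Y →+ Y) (f g : Y → M) : Prop :=
  ∀ u v : Y, f (u + ε1 v) * g (u + ε2 v) = f (u - ε1 v) * g (u - ε2 v)

namespace SymmetryEquation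

variable {ε1 ε2 : Y →+ Y} {f g : Y → M}

theorem f_sub_eq (h : SymmetryEquation ε1 ε2 f g) (hg0 : g 0 = 1) (v : Y) :
    f (ε2 v - ε1 v) = f (ε1 v + ε2 v) * g (ε2 v + ε2 v) := by
  have := h (ε2 v) v
  rwa [sub_self, hg0, mul_one, add_comm (ε2 v) (ε1 v), eq_comm] at this

theorem g_sub_eq (h : SymmetryEquation ε1 ε2 f g) (hf0 : f 0 = 1) (v : Y) :
    g (ε1 v - ε2 v) = f (ε1 v + ε1 v) * g (ε1 v + ε2 v) := by
  have := h (ε1 v) v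
  rwa [sub_self, hf0, one_mul, eq_comm] at this

theorem mul_eq_f_sub_mul_g_sub (h : SymmetryEquation ε1 ε2 f g) (s t : Y) :
    f ((ε1 t + ε2 t) + (ε1 s + ε1 s)) * g ((ε2 t + ε2 t) + (ε1 s + ε2 s)) =
      f (ε2 t - ε1 t) * g (ε1 s - ε2 s) := by
  have := h (ε1 s + ε2 t) (s + t)
  rwa [map_add, map_add,
    show ε1 s + ε2 t + (ε1 s + ε1 t) = (ε1 t + ε2 t) + (ε1 s + ε1 s) by abel,
    show ε1 s + ε2 t + (ε2 s + ε2 t) = (ε2 t + ε2 t) + (ε1 s + ε2 s) by abel,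
    show ε1 s + ε2 t - (ε1 s + ε1 t) = ε2 t - ε1 t by abel,
    show ε1 s + ε2 t - (ε2 s + ε2 t) = ε1 s - ε2 s by abel] at this

end SymmetryEquation

end

/-- The key computation in Lemma 6: if `f, g : Y → ℂ` with `f(0) = g(0) = 1` satisfy
`f(u + ε₁v)·g(u + ε₂v) = f(u − ε₁v)·g(u − ε₂v)` for all `u, v ∈ Y`, where `ε₁, ε₂` are
endomorphisms of the Abelian group `Y`, then
`f((ε₁+ε₂)t + 2ε₁s)·g(2ε₂t + (ε₁+ε₂)s) = f((ε₁+ε₂)t)·g(2ε₂t)·f(2ε₁s)·g((ε₁+ε₂)s)`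
for all `s, t ∈ Y`. -/
theorem symmetry_equation_implies_independence_equation
    {Y : Type*} [AddCommGroup Y] (ε1 ε2 : Y →+ Y) (f g : Y → ℂ)
    (hf0 : f 0 = 1) (hg0 : g 0 = 1)
    (heq : ∀ u v : Y, f (u + ε1 v) * g (u + ε2 v) = f (u - ε1 v) * g (u - ε2 v)) :
    ∀ s t : Y,
      f ((ε1 t + ε2 t) + (ε1 s + ε1 s)) * g ((ε2 t + ε2 t) + (ε1 s + ε2 s)) =
      f (ε1 t + ε2 t) * g (ε2 t + ε2 t) * f (ε1 s + ε1 s) * g (ε1 s + ε2 s) := by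
  intro s t
  have h : SymmetryEquation ε1 ε2 f g := heq
  rw [h.mul_eq_f_sub_mul_g_sub, h.f_sub_eq hg0, h.g_sub_eq hf0]
  ring
end
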